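/- arXiv:2003.13872 — 4 statements merged into one kernel-verified Lean document; each statement's English description precedes it below -/
import Mathlib

section
/- Let λ be a real number and x a nonzero real number. For every integer k ≥ 1, the k-th power of the 2×2 matrix product [[1, 0], [λ/x, 1]] · [[0, x], [−1/x, 0]] equals the matrix [[−U_{k−2}(λ), U_{k−1}(λ)·x], [−U_{k−1}(λ)/x, U_k(λ)]]. -/
/-!
The product is `!![0, x; -1/x, λ]`, of trace `λ` and determinant `1`. For any matrix
`A = !![0, b; c, t]` with `b * c = -1`, multiplying `A ^ (m + 1)` by `A` turns each entry into
`t` times one entry minus another, so the entries of the powers follow the Chebyshev recurrence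
`U_{n+2} = t U_{n+1} - U_n`.
-/

/-- Auxiliary: normalized Chebyshev polynomials of the second kind,
shifted so that index `0` corresponds to `U_{-1}`. -/
noncomputable def chebUAux (x : ℝ) : ℕ → ℝ
  | 0 => 0
  | 1 => 1
  | (n + 2) => x * chebUAux x (n + 1) - chebUAux x n

/-- `chebU k x = U_k(x)` for integers `k ≥ -1` (and `0` for `k < -1`):
`U_{-1}(x) = 0`, `U_0(x) = 1`, `U_k(x) = x·U_{k-1}(x) - U_{k-2}(x)` for `k ≥ 1`. -/
noncomputable def chebU (k : ℤ) (x : ℝ) : ℝ := chebUAux x (k + 1).toNat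

lemma chebU_eq_chebUAux {k : ℤ} {n : ℕ} (h : k + 1 = n) (x : ℝ) : chebU k x = chebUAux x n := by
  rw [chebU, h, Int.toNat_natCast]

lemma pow_succ_eq_chebUAux {t b c : ℝ} (hbc : b * c = -1) (m : ℕ) :
    !![0, b; c, t] ^ (m + 1) =
      !![-chebUAux t m, chebUAux t (m + 1) * b; chebUAux t (m + 1) * c, chebUAux t (m + 2)] := by
  induction m with
  | zero => simp [chebUAux]
  | succ m ih =>
    rw [pow_succ, ih, Matrix.mul_fin_two]
    simp only [chebUAux, EmbeddingLike.apply_eq_iff_eq, Matrix.vecCons_inj, and_true]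
    refine ⟨⟨?_, ?_⟩, ?_, ?_⟩
    · linear_combination chebUAux t (m + 1) * hbc
    · ring
    · ring
    · linear_combination chebUAux t (m + 1) * hbc

/-- For `λ ∈ ℝ`, `x ≠ 0` and `k ≥ 1`,
`([[1,0],[λ/x,1]]·[[0,x],[-1/x,0]])^k
  = [[-U_{k-2}(λ), U_{k-1}(λ)·x],[-U_{k-1}(λ)/x, U_k(λ)]]`. -/
theorem chebyshev_matrix_power (lam x : ℝ) (hx : x ≠ 0) (k : ℕ) (hk : 1 ≤ k) :
    (!![(1 : ℝ), 0; lam / x, 1] * !![(0 : ℝ), x; -1 / x, 0]) ^ k =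
      !![-chebU ((k : ℤ) - 2) lam, chebU ((k : ℤ) - 1) lam * x;
         -chebU ((k : ℤ) - 1) lam / x, chebU (k : ℤ) lam] := by
  obtain ⟨m, rfl⟩ := Nat.exists_eq_add_of_le' hk
  have hprod : !![(1 : ℝ), 0; lam / x, 1] * !![(0 : ℝ), x; -1 / x, 0] = !![0, x; -1 / x, lam] := by
    simp [hx]
  rw [hprod, pow_succ_eq_chebUAux (by field_simp) m,
    chebU_eq_chebUAux (n := m) (by push_cast; ring),
    chebU_eq_chebUAux (n := m + 1) (by push_cast; ring),
    chebU_eq_chebUAux (n := m + 2) (by push_cast; ring), mul_div_assoc', mul_neg_one]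
end

section
/- Let λ be a real number and x a nonzero real number. For every integer k ≥ 1, the k-th power of the 2×2 matrix product [[0, −x], [1/x, 0]] · [[1, 0], [−λ/x, 1]] equals the matrix [[U_k(λ), −U_{k−1}(λ)·x], [U_{k−1}(λ)/x, −U_{k−2}(λ)]]. -/
/-!
The product equals `D * !![λ, -1; 1, 0] * D⁻¹` with `D = diag(1, x⁻¹)`. The powers of the
transfer matrix `!![a, -1; 1, 0]` of the recurrence `u_{n+1} = a u_n - u_{n-1}` are given by
Mathlib's rescaled Chebyshev polynomials `S`, which obey the same recurrence and initial values
as `U`; conjugating by `D` scales the off-diagonal entries by `x` and `x⁻¹`.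
-/

open Polynomial Polynomial.Chebyshev

lemma chebUAux_eq_eval_S (x : ℝ) : ∀ n : ℕ, chebUAux x n = (S ℝ ((n : ℤ) - 1)).eval x
  | 0 => by simp [chebUAux]
  | 1 => by simp [chebUAux]
  | n + 2 => by
    rw [chebUAux, chebUAux_eq_eval_S x (n + 1), chebUAux_eq_eval_S x n,
      show ((n + 2 : ℕ) : ℤ) - 1 = n + 1 by push_cast; ring,
      show ((n + 1 : ℕ) : ℤ) - 1 = n by push_cast; ring, S_add_one]
    simp

lemma chebU_eq_eval_S {k : ℤ} (hk : -1 ≤ k) (x : ℝ) : chebU k x = (S ℝ k).eval x := by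
  rw [chebU, chebUAux_eq_eval_S, Int.toNat_of_nonneg (by omega), add_sub_cancel_right]

lemma pow_eq_eval_S {R : Type*} [CommRing R] (a : R) (n : ℕ) :
    !![a, -1; 1, 0] ^ n =
      !![(S R n).eval a, -(S R (n - 1)).eval a; (S R (n - 1)).eval a, -(S R (n - 2)).eval a] := by
  induction n with
  | zero => simp [S_neg_two, Matrix.one_fin_two]
  | succ n ih =>
    rw [pow_succ, ih, Matrix.mul_fin_two, Nat.cast_succ, add_sub_cancel_right,
      show (n : ℤ) + 1 - 2 = n - 1 by ring, S_add_one, S_sub_two]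
    ext i j
    fin_cases i <;> fin_cases j <;> simp <;> ring

lemma diagonal_conj_fin_two {K : Type*} [Field K] {x : K} (hx : x ≠ 0) (p q r s : K) :
    !![1, 0; 0, x⁻¹] * !![p, q; r, s] * !![1, 0; 0, x] = !![p, q * x; r / x, s] := by
  simp [div_eq_mul_inv, mul_comm, hx]

/-- For `λ ∈ ℝ`, `x ≠ 0` and `k ≥ 1`,
`([[0,-x],[1/x,0]]·[[1,0],[-λ/x,1]])^k
  = [[U_k(λ), -U_{k-1}(λ)·x],[U_{k-1}(λ)/x, -U_{k-2}(λ)]]`. -/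
theorem chebyshev_matrix_power_neg (lam x : ℝ) (hx : x ≠ 0) (k : ℕ) (hk : 1 ≤ k) :
    (!![(0 : ℝ), -x; 1 / x, 0] * !![(1 : ℝ), 0; -lam / x, 1]) ^ k =
      !![chebU (k : ℤ) lam, -chebU ((k : ℤ) - 1) lam * x;
         chebU ((k : ℤ) - 1) lam / x, -chebU ((k : ℤ) - 2) lam] := by
  set D : Matrix (Fin 2) (Fin 2) ℝ := !![1, 0; 0, x⁻¹]
  have hconj : SemiconjBy D !![lam, -1; 1, 0]
      (!![(0 : ℝ), -x; 1 / x, 0] * !![(1 : ℝ), 0; -lam / x, 1]) := by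
    simp [D, SemiconjBy, hx, div_eq_mul_inv, mul_left_comm x]
  have hD : D * !![1, 0; 0, x] = 1 := by
    simp [D, hx, Matrix.one_fin_two]
  rw [← mul_one (_ ^ k), ← hD, ← mul_assoc, ← (hconj.pow_right k).eq, pow_eq_eval_S,
    diagonal_conj_fin_two hx, chebU_eq_eval_S (by omega), chebU_eq_eval_S (by omega),
    chebU_eq_eval_S (by omega)]
end

section
/- Let p ≥ 2 be an integer, λ_p = 2cos(π/p), and x a nonzero real number. Set M = [[1, 0], [λ_p/x, 1]] · [[0, x], [−1/x, 0]]. Then for every integer m ≥ 0, M^{m·p} = (−1)^m · Id, where Id is the 2×2 identity matrix; in particular M^p = −Id. Consequently, multiplying a product of 2×2 matrices by M^{m·p} changes neither the absolute value of the upper-right entry nor the absolute value of the trace of the product. -/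
/-!
The matrix `M = !![0, x; -1/x, λ_p]` has determinant `1` and trace `2 cos θ` with `θ = π/p`, so
Cayley–Hamilton turns its powers into the Chebyshev recurrence for sines:
`sin θ • M^k = sin (kθ) • M - sin ((k-1)θ) • 1`. At `k = p` this reads
`sin θ • M^p = -sin θ • 1`, and `sin θ ≠ 0` since `p ≥ 2`.
-/

open Real

namespace Matrix

theorem sq_fin_two_eq_trace_smul_sub_det_smul {R : Type*} [CommRing R]
    (A : Matrix (Fin 2) (Fin 2) R) : A ^ 2 = A.trace • A - A.det • 1 := by
  rw [A.eta_fin_two]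
  ext i j
  fin_cases i <;> fin_cases j <;> simp [sq, trace_fin_two, det_fin_two] <;> ring

theorem sin_smul_pow_fin_two {A : Matrix (Fin 2) (Fin 2) ℝ} {θ : ℝ}
    (htr : A.trace = 2 * cos θ) (hdet : A.det = 1) (k : ℕ) :
    sin θ • A ^ k = sin (k * θ) • A - sin ((k - 1) * θ) • 1 := by
  induction k with
  | zero => simp [neg_mul, sin_neg]
  | succ k ih =>
    have hrec : sin ((k + 1) * θ) = 2 * cos θ * sin (k * θ) - sin ((k - 1) * θ) := by
      rw [add_mul, sub_mul, one_mul, sin_add, sin_sub]; ring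
    calc sin θ • A ^ (k + 1) = (sin θ • A ^ k) * A := by rw [pow_succ, smul_mul_assoc]
      _ = sin (k * θ) • A ^ 2 - sin ((k - 1) * θ) • A := by
        rw [ih, sub_mul, smul_mul_assoc, smul_mul_assoc, one_mul, sq]
      _ = sin ((k + 1 : ℕ) * θ) • A - sin (((k + 1 : ℕ) - 1) * θ) • 1 := by
        rw [sq_fin_two_eq_trace_smul_sub_det_smul, htr, hdet, Nat.cast_succ, hrec,
          add_sub_cancel_right]
        module

theorem pow_eq_neg_one_of_trace_eq_two_cos_pi_div {A : Matrix (Fin 2) (Fin 2) ℝ} {p : ℕ}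
    (hp : 2 ≤ p) (htr : A.trace = 2 * cos (π / p)) (hdet : A.det = 1) : A ^ p = -1 := by
  have hp0 : (p : ℝ) ≠ 0 := by positivity
  have hsin : sin (π / p) ≠ 0 := by
    refine (sin_pos_of_pos_of_lt_pi (by positivity) ?_).ne'
    exact div_lt_self pi_pos (by exact_mod_cast hp)
  have h := sin_smul_pow_fin_two htr hdet p
  rw [mul_div_cancel₀ _ hp0, sin_pi, zero_smul, zero_sub, sub_mul, mul_div_cancel₀ _ hp0,
    one_mul, sin_pi_sub, ← smul_neg] at h
  exact smul_right_injective _ hsin h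

end Matrix

/-- For `p ≥ 2`, `λ_p = 2cos(π/p)`, `x ≠ 0` and
`M = [[1,0],[λ_p/x,1]]·[[0,x],[-1/x,0]]`, we have `M^(m·p) = (-1)^m · Id`
for every `m ≥ 0` (in particular `M^p = -Id`), and hence multiplying any
2×2 matrix by `M^(m·p)` changes neither the absolute value of its
upper-right entry nor the absolute value of its trace. -/
theorem matrix_power_p_fold (p : ℕ) (hp : 2 ≤ p) (x : ℝ) (hx : x ≠ 0) :
    let lam : ℝ := 2 * Real.cos (Real.pi / (p : ℝ))
    let M : Matrix (Fin 2) (Fin 2) ℝ :=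
      !![(1 : ℝ), 0; lam / x, 1] * !![(0 : ℝ), x; -1 / x, 0]
    (∀ m : ℕ, M ^ (m * p) = ((-1 : ℝ) ^ m) • (1 : Matrix (Fin 2) (Fin 2) ℝ)) ∧
    M ^ p = -(1 : Matrix (Fin 2) (Fin 2) ℝ) ∧
    (∀ m : ℕ, ∀ A : Matrix (Fin 2) (Fin 2) ℝ,
      |(A * M ^ (m * p)) 0 1| = |A 0 1| ∧
      |(A * M ^ (m * p)).trace| = |A.trace|) := by
  intro lam M
  have hM : M = !![0, x; -1 / x, lam] := by
    simp only [M, Matrix.mul_fin_two]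
    congr <;> field_simp <;> ring
  have hMp : M ^ p = -1 := by
    refine Matrix.pow_eq_neg_one_of_trace_eq_two_cos_pi_div hp ?_ ?_
    · simp [hM, Matrix.trace_fin_two_of, lam]
    · rw [hM, Matrix.det_fin_two_of]
      field_simp
      ring
  have hMmp (m : ℕ) : M ^ (m * p) = (-1 : ℝ) ^ m • 1 := by
    rw [mul_comm, pow_mul, hMp, ← neg_one_smul ℝ 1, smul_pow, one_pow]
  refine ⟨hMmp, hMp, fun m A => ?_⟩
  simp [hMmp, abs_mul]
end

section
/- For every integer n ≥ 1, the universal snake graph UG_n has exactly 2^n perfect matchings. -/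
/-- The directed edge relation of the universal snake graph `UG_n` on
vertex set `{0,1} × {0,…,n}`: vertical edges `(i,j) — (i,j+1)`,
horizontal edges `(0,j) — (1,j)`, and diagonal edges `(1,j) — (0,j+2)`. -/
def ugRel (n : ℕ) (a b : Fin 2 × Fin (n + 1)) : Prop :=
  (a.1 = b.1 ∧ (a.2 : ℕ) + 1 = (b.2 : ℕ)) ∨
  (a.2 = b.2 ∧ a.1 ≠ b.1) ∨
  (a.1 = 1 ∧ b.1 = 0 ∧ (a.2 : ℕ) + 2 = (b.2 : ℕ))

/-- The universal snake graph `UG_n` as a simple graph. -/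
def UG (n : ℕ) : SimpleGraph (Fin 2 × Fin (n + 1)) :=
  SimpleGraph.fromRel (ugRel n)

/-! In `UG_{n+1}` let `a = (1, n+1)`, `b = (0, n+1)` and `c = (1, n)`. The only neighbours of `a`
are `b` and `c`, so every perfect matching pairs `a` with one of them; and `b`, `c` have the same
neighbourhood, so swapping them is an automorphism exchanging the two kinds of matchings. The
matchings pairing `a` with `b` are those of `UG_{n+1} - {a, b} ≅ UG_n`, hence the number of
perfect matchings doubles with each column, starting from the single edge of `UG_0`. -/

namespace SimpleGraph

variable {V W : Type*} {G : SimpleGraph V} {G' : SimpleGraph W}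

abbrev MatchingInvolution (G : SimpleGraph V) : Type _ :=
  {f : V → V // Function.Involutive f ∧ ∀ v, G.Adj v (f v)}

namespace Subgraph.IsPerfectMatching

variable {M : G.Subgraph} (hM : M.IsPerfectMatching)

noncomputable def partner (v : V) : V :=
  (isPerfectMatching_iff.mp hM v).exists.choose

theorem partner_eq_iff {v w : V} : hM.partner v = w ↔ M.Adj v w :=
  have h := isPerfectMatching_iff.mp hM v
  ⟨fun hw => hw ▸ h.exists.choose_spec, fun hvw => h.unique h.exists.choose_spec hvw⟩

theorem adj_partner (v : V) : M.Adj v (hM.partner v) :=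
  hM.partner_eq_iff.mp rfl

end Subgraph.IsPerfectMatching

namespace MatchingInvolution

def toSubgraph (f : G.MatchingInvolution) : G.Subgraph where
  verts := Set.univ
  Adj v w := f.1 v = w
  adj_sub := by rintro v _ rfl; exact f.2.2 v
  edge_vert _ := Set.mem_univ _
  symm := ⟨by rintro v _ rfl; exact f.2.1 v⟩

theorem isPerfectMatching_toSubgraph (f : G.MatchingInvolution) :
    f.toSubgraph.IsPerfectMatching :=
  Subgraph.isPerfectMatching_iff.mpr fun v => ⟨f.1 v, rfl, fun _ hw => Eq.symm hw⟩

def map (φ : G ≃g G') (f : G.MatchingInvolution) : G'.MatchingInvolution :=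
  ⟨φ ∘ f.1 ∘ φ.symm, fun w => by simp [f.2.1 _],
    fun w => by simpa using φ.map_adj_iff.mpr (f.2.2 (φ.symm w))⟩

end MatchingInvolution

noncomputable def perfectMatchingEquivMatchingInvolution :
    {M : G.Subgraph // M.IsPerfectMatching} ≃ G.MatchingInvolution where
  toFun M := ⟨M.2.partner, fun v => M.2.partner_eq_iff.mpr (M.2.adj_partner v).symm,
    fun v => M.1.adj_sub (M.2.adj_partner v)⟩
  invFun f := ⟨f.toSubgraph, f.isPerfectMatching_toSubgraph⟩
  left_inv M := by
    ext v w
    · simp [MatchingInvolution.toSubgraph, M.2.2 v]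
    · exact M.2.partner_eq_iff
  right_inv f := Subtype.ext <| funext fun v =>
    f.isPerfectMatching_toSubgraph.partner_eq_iff.mpr rfl

def Iso.matchingInvolutionEquiv (φ : G ≃g G') :
    G.MatchingInvolution ≃ G'.MatchingInvolution where
  toFun := .map φ
  invFun := .map φ.symm
  left_inv f := by ext; simp [MatchingInvolution.map]
  right_inv f := by ext; simp [MatchingInvolution.map]

theorem Iso.card_perfectMatching_eq (φ : G ≃g G') :
    Nat.card {M : G.Subgraph // M.IsPerfectMatching} =
      Nat.card {M : G'.Subgraph // M.IsPerfectMatching} :=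
  Nat.card_congr <| perfectMatchingEquivMatchingInvolution.trans <|
    φ.matchingInvolutionEquiv.trans perfectMatchingEquivMatchingInvolution.symm

def Iso.swapOfNeighborSetEq [DecidableEq V] {b c : V} (h : G.neighborSet b = G.neighborSet c) :
    G ≃g G where
  toEquiv := Equiv.swap b c
  map_rel_iff' := by
    intro x y
    have hb : ∀ w, G.Adj b w ↔ G.Adj c w := fun w => Set.ext_iff.mp h w
    have hbc : ¬ G.Adj b c := fun hbc => G.loopless.irrefl c ((hb c).mp hbc)
    simp only [Equiv.swap_apply_def]
    split_ifs <;> subst_vars <;> grind [adj_comm]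

namespace MatchingInvolution

variable {a b : V}

theorem mapsTo_compl_pair {f : G.MatchingInvolution} (hf : f.1 a = b) :
    Set.MapsTo f.1 {a, b}ᶜ {a, b}ᶜ := by
  intro v hv hfv
  simp only [Set.mem_compl_iff, Set.mem_insert_iff, Set.mem_singleton_iff, not_or] at hv hfv
  rcases hfv with hfv | hfv
  · exact hv.2 (by rw [← f.2.1 v, hfv, hf])
  · exact hv.1 (by rw [← f.2.1 v, hfv, ← hf, f.2.1])

def restrict (f : {f : G.MatchingInvolution // f.1 a = b}) :
    (G.induce {a, b}ᶜ).MatchingInvolution :=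
  ⟨(mapsTo_compl_pair f.2).restrict, fun v => Subtype.ext (f.1.2.1 v), fun v => f.1.2.2 v⟩

variable [DecidableEq V]

def extendFun (a b : V) (g : ({a, b}ᶜ : Set V) → ({a, b}ᶜ : Set V)) (v : V) : V :=
  if hv : v ∈ ({a, b}ᶜ : Set V) then g ⟨v, hv⟩ else Equiv.swap a b v

theorem extendFun_of_mem {g : ({a, b}ᶜ : Set V) → ({a, b}ᶜ : Set V)}
    (v : ({a, b}ᶜ : Set V)) :
    extendFun a b g v = g v := by
  simp [extendFun, v.2]

theorem extendFun_of_not_mem {g : ({a, b}ᶜ : Set V) → ({a, b}ᶜ : Set V)} {v : V}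
    (hv : v ∉ ({a, b}ᶜ : Set V)) : extendFun a b g v = Equiv.swap a b v := by
  simp [extendFun, hv]

def extend (hab : G.Adj a b) (g : (G.induce {a, b}ᶜ).MatchingInvolution) :
    {f : G.MatchingInvolution // f.1 a = b} := by
  refine ⟨⟨extendFun a b g.1, fun v => ?_, fun v => ?_⟩, ?_⟩
  · by_cases hv : v ∈ ({a, b}ᶜ : Set V)
    · rw [extendFun_of_mem ⟨v, hv⟩, extendFun_of_mem, g.2.1]
    · have hv' : Equiv.swap a b v ∉ ({a, b}ᶜ : Set V) := by
        simp only [Set.mem_compl_iff, Set.mem_insert_iff, Set.mem_singleton_iff, not_not] at hv ⊢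
        rcases hv with rfl | rfl <;> simp
      rw [extendFun_of_not_mem hv, extendFun_of_not_mem hv', Equiv.swap_apply_self]
  · by_cases hv : v ∈ ({a, b}ᶜ : Set V)
    · rw [extendFun_of_mem ⟨v, hv⟩]
      exact g.2.2 ⟨v, hv⟩
    · rw [extendFun_of_not_mem hv]
      simp only [Set.mem_compl_iff, Set.mem_insert_iff, Set.mem_singleton_iff, not_not] at hv
      rcases hv with rfl | rfl <;> simp [hab, hab.symm]
  · exact (extendFun_of_not_mem (by simp)).trans (Equiv.swap_apply_left a b)

def restrictEquiv (hab : G.Adj a b) :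
    {f : G.MatchingInvolution // f.1 a = b} ≃ (G.induce {a, b}ᶜ).MatchingInvolution where
  toFun := restrict
  invFun := extend hab
  left_inv f := by
    refine Subtype.ext (Subtype.ext (funext fun v => ?_))
    by_cases hv : v ∈ ({a, b}ᶜ : Set V)
    · exact extendFun_of_mem ⟨v, hv⟩
    · change extendFun a b _ v = f.1.1 v
      rw [extendFun_of_not_mem hv]
      simp only [Set.mem_compl_iff, Set.mem_insert_iff, Set.mem_singleton_iff, not_not] at hv
      rcases hv with rfl | rfl
      · rw [Equiv.swap_apply_left, f.2]
      · rw [Equiv.swap_apply_right]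
        exact (f.1.2.1 a).symm.trans (congrArg f.1.1 f.2)
  right_inv g := Subtype.ext (funext fun v => Subtype.ext (extendFun_of_mem v))

end MatchingInvolution

theorem card_perfectMatching_eq_two_mul [Finite V] {a b c : V} (hbc : b ≠ c)
    (ha : ∀ w, G.Adj a w ↔ w = b ∨ w = c) (htwin : G.neighborSet b = G.neighborSet c) :
    Nat.card {M : G.Subgraph // M.IsPerfectMatching} =
      2 * Nat.card {M : (G.induce {a, b}ᶜ).Subgraph // M.IsPerfectMatching} := by
  classical
  have hab : G.Adj a b := (ha b).2 (Or.inl rfl)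
  have hac : G.Adj a c := (ha c).2 (Or.inr rfl)
  have split : G.MatchingInvolution ≃
      {f : G.MatchingInvolution // f.1 a = b} ⊕ {f : G.MatchingInvolution // f.1 a = c} :=
    (Equiv.sumCompl fun f => f.1 a = b).symm.trans <| Equiv.sumCongr (Equiv.refl _) <|
      Equiv.subtypeEquivRight fun f =>
        ⟨((ha _).1 (f.2.2 a)).resolve_left, fun hc hb => hbc (hb.symm.trans hc)⟩
  have twin : {f : G.MatchingInvolution // f.1 a = c} ≃ {f : G.MatchingInvolution // f.1 a = b} :=
    (Iso.swapOfNeighborSetEq htwin).matchingInvolutionEquiv.subtypeEquiv fun f => by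
      simp [Iso.matchingInvolutionEquiv, MatchingInvolution.map, Iso.swapOfNeighborSetEq,
        Equiv.swap_apply_of_ne_of_ne hab.ne hac.ne, Equiv.swap_apply_eq_iff]
  rw [Nat.card_congr perfectMatchingEquivMatchingInvolution,
    Nat.card_congr perfectMatchingEquivMatchingInvolution, Nat.card_congr split, Nat.card_sum,
    Nat.card_congr twin, Nat.card_congr (MatchingInvolution.restrictEquiv hab), two_mul]

end SimpleGraph

namespace UG

theorem adj_iff {n : ℕ} {v w : Fin 2 × Fin (n + 1)} :
    (UG n).Adj v w ↔ v ≠ w ∧ (ugRel n v w ∨ ugRel n w v) :=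
  SimpleGraph.fromRel_adj _ _ _

def castSuccEmb (n : ℕ) : UG n ↪g UG (n + 1) where
  toFun v := (v.1, v.2.castSucc)
  inj' v w h := by simpa [Prod.ext_iff] using h
  map_rel_iff' := by
    rintro ⟨i, j⟩ ⟨i', j'⟩
    change (UG (n + 1)).Adj (i, j.castSucc) (i', j'.castSucc) ↔ _
    simp only [adj_iff, ugRel, ne_eq, Prod.ext_iff, Fin.ext_iff, Fin.val_castSucc]

@[simp]
theorem castSuccEmb_apply (n : ℕ) (v : Fin 2 × Fin (n + 1)) :
    castSuccEmb n v = (v.1, v.2.castSucc) :=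
  rfl

theorem range_castSuccEmb (n : ℕ) :
    Set.range (castSuccEmb n) = {(1, Fin.last (n + 1)), (0, Fin.last (n + 1))}ᶜ := by
  ext ⟨i, j⟩
  induction j using Fin.lastCases with
  | last => fin_cases i <;> simp [Fin.castSucc_ne_last]
  | cast j => simp [Fin.castSucc_ne_last]

theorem adj_last_iff (n : ℕ) (w : Fin 2 × Fin (n + 2)) :
    (UG (n + 1)).Adj (1, Fin.last (n + 1)) w ↔
      w = (0, Fin.last (n + 1)) ∨ w = (1, (Fin.last n).castSucc) := by
  obtain ⟨⟨i, hi⟩, ⟨j, hj⟩⟩ := w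
  simp only [adj_iff, ugRel, ne_eq, Prod.ext_iff, Fin.ext_iff, Fin.val_last, Fin.val_castSucc,
    Fin.val_zero, Fin.val_one]
  omega

theorem neighborSet_last_eq (n : ℕ) :
    (UG (n + 1)).neighborSet (0, Fin.last (n + 1)) =
      (UG (n + 1)).neighborSet (1, (Fin.last n).castSucc) := by
  ext ⟨⟨i, hi⟩, ⟨j, hj⟩⟩
  simp only [SimpleGraph.mem_neighborSet, adj_iff, ugRel, ne_eq, Prod.ext_iff, Fin.ext_iff,
    Fin.val_last, Fin.val_castSucc, Fin.val_zero, Fin.val_one, true_and]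
  constructor <;> intro h <;> omega

theorem card_perfectMatching_zero :
    Nat.card {M : (UG 0).Subgraph // M.IsPerfectMatching} = 1 := by
  rw [Nat.card_congr SimpleGraph.perfectMatchingEquivMatchingInvolution,
    Nat.card_eq_one_iff_unique]
  refine ⟨⟨fun f g => Subtype.ext (funext fun v => ?_)⟩,
    ⟨⟨fun v => (v.1.rev, v.2), ?_, ?_⟩⟩⟩
  · have two_vertices : ∀ x y v : Fin 2 × Fin 1, x ≠ v → y ≠ v → x = y := by decide
    exact two_vertices _ _ v (f.2.2 v).ne' (g.2.2 v).ne'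
  · intro v; simp
  · rintro ⟨⟨i, hi⟩, ⟨j, hj⟩⟩
    simp only [adj_iff, ugRel, ne_eq, Prod.ext_iff, Fin.ext_iff, Fin.val_rev, Fin.val_zero,
      Fin.val_one, true_and]
    omega

end UG

theorem card_perfectMatchings_UG_general (n : ℕ) :
    Nat.card {M : (UG n).Subgraph // M.IsPerfectMatching} = 2 ^ n := by
  induction n with
  | zero => exact UG.card_perfectMatching_zero
  | succ n ih =>
    rw [SimpleGraph.card_perfectMatching_eq_two_mul (by simp) (UG.adj_last_iff n)
      (UG.neighborSet_last_eq n), ← UG.range_castSuccEmb,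
      ← (UG.castSuccEmb n).isoInduceRange.card_perfectMatching_eq, ih, pow_succ, mul_comm]

/-- For every `n ≥ 1`, the universal snake graph `UG_n` has exactly `2^n`
perfect matchings. -/
theorem card_perfectMatchings_UG (n : ℕ) (hn : 1 ≤ n) :
    Nat.card {M : (UG n).Subgraph // M.IsPerfectMatching} = 2 ^ n :=
  card_perfectMatchings_UG_general n
end
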